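/- The interpolation inequality for μ-strongly convex, L-smooth functions: if f is μ-strongly convex and L-smooth with 0 < μ < L, then for all x, y: f(x) ≥ f(y) + ⟪∇f(y), x - y⟫ + (1/(2L))‖∇f(x) - ∇f(y)‖² + (μL/(2(L-μ)))‖x - y - (1/L)(∇f(x) - ∇f(y))‖². -/

import Mathlib

/-!
For every `z`, strong convexity at `y` and the descent lemma for the `L`-Lipschitz gradient at `x`
sandwich `f z`:
`f y + ⟪∇f y, z - y⟫ + μ/2 ‖z - y‖² ≤ f z ≤ f x + ⟪∇f x, z - x⟫ + L/2 ‖z - x‖²`.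
Since `μ < L`, the outer inequality, read as a condition on `z`, is strongest at the maximiser
`z = x - (L - μ)⁻¹ • (∇f x - ∇f y - μ • (x - y))` of the concave quadratic
`⟪∇f y, z - y⟫ + μ/2 ‖z - y‖² - ⟪∇f x, z - x⟫ - L/2 ‖z - x‖²`, where it is exactly the claim.
-/

open RealInnerProductSpace

section

variable {E : Type*} [NormedAddCommGroup E] [InnerProductSpace ℝ E]

theorem quadratic_bounds_gap_at_maximizer {μ L : ℝ} (hL : L ≠ 0) (hμL : μ ≠ L) (x y gx gy z : E)
    (hz : z = x - (L - μ)⁻¹ • (gx - gy - μ • (x - y))) :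
    ⟪gy, z - y⟫ + μ / 2 * ‖z - y‖ ^ 2 - (⟪gx, z - x⟫ + L / 2 * ‖z - x‖ ^ 2) =
      ⟪gy, x - y⟫ + 1 / (2 * L) * ‖gx - gy‖ ^ 2 +
        μ * L / (2 * (L - μ)) * ‖x - y - L⁻¹ • (gx - gy)‖ ^ 2 := by
  have hK : L - μ ≠ 0 := sub_ne_zero.mpr hμL.symm
  have hzy : z - y = (x - y) - (L - μ)⁻¹ • (gx - gy - μ • (x - y)) := by rw [hz]; abel
  have hzx : z - x = -((L - μ)⁻¹ • (gx - gy - μ • (x - y))) := by rw [hz]; abel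
  have hlinear : ⟪gy, z - y⟫ - ⟪gx, z - x⟫ =
      ⟪gy, x - y⟫ + (L - μ)⁻¹ * ⟪gx - gy, gx - gy - μ • (x - y)⟫ := by
    rw [hzy, hzx]
    simp only [inner_sub_right, inner_neg_right, real_inner_smul_right, inner_sub_left]
    ring
  have hquadratic : μ / 2 * ‖z - y‖ ^ 2 - L / 2 * ‖z - x‖ ^ 2 +
      (L - μ)⁻¹ * ⟪gx - gy, gx - gy - μ • (x - y)⟫ =
      1 / (2 * L) * ‖gx - gy‖ ^ 2 + μ * L / (2 * (L - μ)) * ‖x - y - L⁻¹ • (gx - gy)‖ ^ 2 := by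
    rw [hzy, hzx, norm_neg]
    generalize x - y = w, gx - gy = D
    simp only [← real_inner_self_eq_norm_sq, inner_sub_left, inner_sub_right,
      real_inner_smul_left, real_inner_smul_right, real_inner_comm w D]
    field_simp
    ring
  linear_combination hlinear + hquadratic

variable [CompleteSpace E] {f : E → ℝ} {g : E → E}

theorem hasDerivAt_comp_add_smul_of_hasGradientAt (hg : ∀ x, HasGradientAt f (g x) x)
    (a v : E) (t : ℝ) : HasDerivAt (fun s : ℝ => f (a + s • v)) ⟪g (a + t • v), v⟫ t := by
  have hline : HasDerivAt (fun s : ℝ => a + s • v) v t := by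
    simpa using ((hasDerivAt_id t).smul_const v).const_add a
  have hcomp := (hg (a + t • v)).hasFDerivAt.comp_hasDerivAt t hline
  simp only [Function.comp_def, InnerProductSpace.toDual_apply_apply] at hcomp
  exact hcomp

theorem le_add_inner_add_sq_of_lipschitz_gradient (hg : ∀ x, HasGradientAt f (g x) x) {L : ℝ}
    (hsmooth : ∀ x y, ‖g x - g y‖ ≤ L * ‖x - y‖) (a b : E) :
    f b ≤ f a + ⟪g a, b - a⟫ + L / 2 * ‖b - a‖ ^ 2 := by
  set v := b - a
  let φ : ℝ → ℝ := fun t => f (a + t • v) - t * ⟪g a, v⟫ - L / 2 * ‖v‖ ^ 2 * t ^ 2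
  have hφ : ∀ t, HasDerivAt φ (⟪g (a + t • v), v⟫ - ⟪g a, v⟫ - L * ‖v‖ ^ 2 * t) t := by
    intro t
    refine (((hasDerivAt_comp_add_smul_of_hasGradientAt hg a v t).sub
      ((hasDerivAt_id' t).mul_const ⟪g a, v⟫)).sub
      ((hasDerivAt_pow 2 t).const_mul (L / 2 * ‖v‖ ^ 2))).congr_deriv ?_
    norm_num
    ring
  have hφ_nonpos : ∀ t ∈ interior (Set.Ici (0 : ℝ)),
      ⟪g (a + t • v), v⟫ - ⟪g a, v⟫ - L * ‖v‖ ^ 2 * t ≤ 0 := by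
    intro t ht
    rw [interior_Ici, Set.mem_Ioi] at ht
    calc ⟪g (a + t • v), v⟫ - ⟪g a, v⟫ - L * ‖v‖ ^ 2 * t
        = ⟪g (a + t • v) - g a, v⟫ - L * ‖v‖ ^ 2 * t := by rw [inner_sub_left]
      _ ≤ ‖g (a + t • v) - g a‖ * ‖v‖ - L * ‖a + t • v - a‖ * ‖v‖ := by
          rw [add_sub_cancel_left, norm_smul, Real.norm_of_nonneg ht.le]
          linarith [real_inner_le_norm (g (a + t • v) - g a) v]
      _ ≤ 0 := by
          rw [sub_nonpos]
          exact mul_le_mul_of_nonneg_right (hsmooth _ _) (norm_nonneg v)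
  have hφ_anti : AntitoneOn φ (Set.Ici 0) :=
    antitoneOn_of_hasDerivWithinAt_nonpos (convex_Ici 0)
      (fun t _ => (hφ t).continuousAt.continuousWithinAt)
      (fun t _ => (hφ t).hasDerivWithinAt) hφ_nonpos
  have h01 : φ 1 ≤ φ 0 := hφ_anti Set.self_mem_Ici (Set.mem_Ici.mpr zero_le_one) zero_le_one
  simp only [φ, v, one_smul, zero_smul, add_zero, add_sub_cancel] at h01
  linarith

end

theorem pep_interpolation_inequality
    {d : ℕ} (f : EuclideanSpace ℝ (Fin d) → ℝ)
    (g : EuclideanSpace ℝ (Fin d) → EuclideanSpace ℝ (Fin d))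
    (hg : ∀ x, HasGradientAt f (g x) x)
    (μ L : ℝ) (hμ : 0 < μ) (hμL : μ < L)
    (hsc : ∀ x y, f y ≥ f x + ⟪g x, y - x⟫ + μ / 2 * ‖y - x‖ ^ 2)
    (hsmooth : ∀ x y, ‖g x - g y‖ ≤ L * ‖x - y‖) :
    ∀ x y, f x ≥ f y + ⟪g y, x - y⟫ + 1 / (2 * L) * ‖g x - g y‖ ^ 2 +
      μ * L / (2 * (L - μ)) * ‖x - y - L⁻¹ • (g x - g y)‖ ^ 2 := by
  intro x y
  set z := x - (L - μ)⁻¹ • (g x - g y - μ • (x - y))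
  have hgap := quadratic_bounds_gap_at_maximizer (hμ.trans hμL).ne' hμL.ne x y (g x) (g y) z rfl
  have hlower := hsc y z
  have hupper := le_add_inner_add_sq_of_lipschitz_gradient hg hsmooth x z
  linarith
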